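/- Let (G, B₁, B₂) be a Rota-Baxter system of groups with descendent operation ∘ and cocycle Φ(a) = B₁(a)B₂(a). Then (G, ∘) is a group if and only if Φ is bijective. -/

import Mathlib

/-!
The descendent operation `a ∘ b = B₁(a) b B₂(a)` is associative, its left translations
`b ↦ B₁(a) b B₂(a)` are bijective, and the cocycle is the right translation `Φ(a) = a ∘ 1`,
which satisfies `Φ(a ∘ c) = a ∘ Φ(c)`. If `(G, ∘)` is a group, `Φ` is a right translation, hence
bijective. Conversely, if `Φ` is bijective, the element `e` with `Φ(e) = 1` is a right identity,
because `Φ(a ∘ e) = a ∘ 1 = Φ(a)`; an associative operation with a right identity and surjective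
left translations is a group.
-/

def IsGroupOp {α : Type*} (op : α → α → α) : Prop :=
  (∀ a b c, op (op a b) c = op a (op b c)) ∧
    ∃ e, (∀ a, op e a = a ∧ op a e = a) ∧ ∀ a, ∃ b, op a b = e ∧ op b a = e

namespace IsGroupOp

variable {α : Type*} {op : α → α → α}

theorem bijective_op_right (h : IsGroupOp op) (c : α) : Function.Bijective (op · c) := by
  obtain ⟨assoc, e, hid, hinv⟩ := h
  obtain ⟨d, hcd, hdc⟩ := hinv c
  refine ⟨fun x y hxy => ?_, fun y => ⟨op y d, by simp only [assoc, hdc, (hid y).2]⟩⟩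
  calc x = op (op x c) d := by rw [assoc, hcd, (hid x).2]
    _ = op (op y c) d := congrArg (op · d) hxy
    _ = y := by rw [assoc, hcd, (hid y).2]

theorem of_op_right_eq_self (assoc : ∀ a b c, op (op a b) c = op a (op b c))
    (solve : ∀ a y, ∃ x, op a x = y) {e : α} (he : ∀ a, op a e = a) : IsGroupOp op := by
  -- For `b` a right inverse of `a` and `c` one of `b`, both `a` and `e ∘ a` equal `e ∘ c`.
  have key : ∀ a b, op a b = e → op e a = a ∧ op b a = e := by
    intro a b hab
    obtain ⟨c, hbc⟩ := solve b e
    have ha : a = op e c := by rw [← hab, assoc, hbc, he]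
    constructor
    · rw [ha, ← assoc, he]
    · rw [ha, ← assoc, he, hbc]
  refine ⟨assoc, e, fun a => ⟨?_, he a⟩, fun a => ?_⟩
  · obtain ⟨b, hab⟩ := solve a e
    exact (key a b hab).1
  · obtain ⟨b, hab⟩ := solve a e
    exact ⟨b, hab, (key a b hab).2⟩

end IsGroupOp

namespace RotaBaxterSystem

variable {G : Type*} [Group G] (B₁ B₂ : G → G)

def descendent (a b : G) : G := B₁ a * b * B₂ a

def cocycle (a : G) : G := B₁ a * B₂ a

theorem cocycle_eq_descendent_one (a : G) : cocycle B₁ B₂ a = descendent B₁ B₂ a 1 := by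
  rw [cocycle, descendent, mul_one]

theorem exists_descendent_eq (a y : G) : ∃ x, descendent B₁ B₂ a x = y :=
  ⟨(B₁ a)⁻¹ * y * (B₂ a)⁻¹, by rw [descendent]; group⟩

variable {B₁ B₂}
variable (h1 : ∀ a b : G, B₁ a * B₁ b = B₁ (B₁ a * b * B₂ a))
  (h2 : ∀ a b : G, B₂ b * B₂ a = B₂ (B₁ a * b * B₂ a))
include h1 h2

theorem descendent_assoc (a b c : G) :
    descendent B₁ B₂ (descendent B₁ B₂ a b) c = descendent B₁ B₂ a (descendent B₁ B₂ b c) := by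
  simp only [descendent, ← h1, ← h2]
  group

theorem cocycle_descendent (a c : G) :
    cocycle B₁ B₂ (descendent B₁ B₂ a c) = descendent B₁ B₂ a (cocycle B₁ B₂ c) := by
  simp only [cocycle, descendent, ← h1, ← h2]
  group

theorem isGroupOp_descendent_iff :
    IsGroupOp (descendent B₁ B₂) ↔ Function.Bijective (cocycle B₁ B₂) := by
  have hΦ : cocycle B₁ B₂ = (descendent B₁ B₂ · 1) := funext (cocycle_eq_descendent_one B₁ B₂)
  refine ⟨fun h => hΦ ▸ h.bijective_op_right 1, fun ⟨hinj, hsurj⟩ => ?_⟩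
  obtain ⟨e, he⟩ := hsurj 1
  refine IsGroupOp.of_op_right_eq_self (descendent_assoc h1 h2) (exists_descendent_eq B₁ B₂)
    (e := e) fun a => hinj ?_
  rw [cocycle_descendent h1 h2, he, cocycle_eq_descendent_one]

end RotaBaxterSystem

open RotaBaxterSystem in
theorem stmt_13 {G : Type*} [Group G] (B₁ B₂ : G → G)
    (h1 : ∀ a b : G, B₁ a * B₁ b = B₁ (B₁ a * b * B₂ a))
    (h2 : ∀ a b : G, B₂ b * B₂ a = B₂ (B₁ a * b * B₂ a))
    (circ : G → G → G) (hcirc : ∀ a b, circ a b = B₁ a * b * B₂ a)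
    (Φ : G → G) (hΦ : ∀ a, Φ a = B₁ a * B₂ a) :
    ((∀ a b c : G, circ (circ a b) c = circ a (circ b c)) ∧
     ∃ e : G, (∀ a : G, circ e a = a ∧ circ a e = a) ∧
       ∀ a : G, ∃ b : G, circ a b = e ∧ circ b a = e) ↔
    Function.Bijective Φ := by
  obtain rfl : circ = descendent B₁ B₂ := funext₂ hcirc
  obtain rfl : Φ = cocycle B₁ B₂ := funext hΦ
  exact isGroupOp_descendent_iff h1 h2
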